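/- arXiv:0805.2014 — 5 statements merged into one kernel-verified Lean document; each statement's English description precedes it below -/
import Mathlib

section
/- Let n ≥ 2 and let Q be an n×n complex self-adjoint matrix with Q_{ii} = 0 for all i and |Q_{ij}| = 1 for all i ≠ j. Then Q satisfies Q² = (n−1)·I + μ·Q for some real number μ if and only if Q has exactly two eigenvalues, i.e., the spectrum of Q (as a subset of ℂ) has exactly two elements. -/
/-!
By the continuous functional calculus, a self-adjoint `a` satisfies `a² = e + f a` exactly when
every point of its spectrum is a root of `x² = e + f x`. Hence `a` has exactly two spectral values
iff it satisfies some such quadratic and is not a scalar. A Seidel matrix of size `n ≥ 2` is never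
a scalar, and taking traces (`tr Q = 0`, `tr Q² = n (n - 1)`) forces `e = n - 1`.
-/

open Matrix

lemma sq_eq_add_mul_iff_of_ne {K : Type*} [Field K] {e f x y z : K} (hxy : x ≠ y)
    (hx : x ^ 2 = e + f * x) (hy : y ^ 2 = e + f * y) :
    z ^ 2 = e + f * z ↔ z = x ∨ z = y := by
  have hsum : x + y = f :=
    mul_left_cancel₀ (sub_ne_zero.mpr hxy) (by linear_combination hx - hy)
  refine ⟨fun hz ↦ ?_, by rintro (rfl | rfl) <;> assumption⟩
  have hfactor : (z - x) * (z - y) = 0 := by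
    linear_combination hz - z * hsum - hx + x * hsum
  simpa [sub_eq_zero] using hfactor

lemma Set.exists_ne_image_eq_pair_iff {α β : Type*} {f : α → β} (hf : f.Injective)
    {s : Set α} : (∃ a b, a ≠ b ∧ f '' s = {a, b}) ↔ ∃ x y, x ≠ y ∧ s = {x, y} := by
  simp_rw [← Set.ncard_eq_two, Set.ncard_image_of_injective s hf]

section SelfAdjoint

variable {A : Type*} [Ring A] [StarRing A] [Algebra ℝ A] [TopologicalSpace A]
  [ContinuousFunctionalCalculus ℝ A IsSelfAdjoint] {a : A}

lemma IsSelfAdjoint.sq_eq_algebraMap_add_smul_iff (ha : IsSelfAdjoint a) (e f : ℝ) :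
    a ^ 2 = algebraMap ℝ A e + f • a ↔ ∀ x ∈ spectrum ℝ a, x ^ 2 = e + f * x := by
  have hlin : cfc (fun x : ℝ ↦ e + f * x) a = algebraMap ℝ A e + f • a := by
    rw [cfc_add a (fun _ ↦ e) (fun x ↦ f * x), cfc_const e a, cfc_const_mul f (fun x ↦ x) a,
      cfc_id' ℝ a]
  rw [← cfc_pow_id (R := ℝ) a 2, ← hlin, cfc_eq_cfc_iff_eqOn]
  rfl

lemma IsSelfAdjoint.ne_algebraMap_of_mem_spectrum (ha : IsSelfAdjoint a) {x y : ℝ}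
    (hx : x ∈ spectrum ℝ a) (hy : y ∈ spectrum ℝ a) (hxy : x ≠ y) (r : ℝ) :
    a ≠ algebraMap ℝ A r := by
  intro har
  have hid : (spectrum ℝ a).EqOn id (fun _ ↦ r) := by
    rw [← cfc_eq_cfc_iff_eqOn, cfc_id ℝ a, cfc_const r a, har]
  exact hxy ((hid hx).trans (hid hy).symm)

lemma IsSelfAdjoint.exists_mem_spectrum_ne (ha : IsSelfAdjoint a)
    (hscalar : ∀ r : ℝ, a ≠ algebraMap ℝ A r) (r : ℝ) : ∃ x ∈ spectrum ℝ a, x ≠ r := by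
  by_contra! h
  exact hscalar r (CFC.eq_algebraMap_of_spectrum_subset_singleton a r h)

lemma IsSelfAdjoint.exists_spectrum_eq_pair_iff (ha : IsSelfAdjoint a) :
    (∃ x y : ℝ, x ≠ y ∧ spectrum ℝ a = {x, y}) ↔
      (∃ e f : ℝ, a ^ 2 = algebraMap ℝ A e + f • a) ∧ ∀ r : ℝ, a ≠ algebraMap ℝ A r := by
  constructor
  · rintro ⟨x, y, hxy, hspec⟩
    refine ⟨⟨-(x * y), x + y, (ha.sq_eq_algebraMap_add_smul_iff _ _).mpr ?_⟩,
      ha.ne_algebraMap_of_mem_spectrum (by simp [hspec]) (by simp [hspec]) hxy⟩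
    rw [hspec]
    rintro z (rfl | rfl) <;> ring
  · rintro ⟨⟨e, f, hquad⟩, hscalar⟩
    have hroot := (ha.sq_eq_algebraMap_add_smul_iff e f).mp hquad
    obtain ⟨x, hx, -⟩ := ha.exists_mem_spectrum_ne hscalar 0
    obtain ⟨y, hy, hyx⟩ := ha.exists_mem_spectrum_ne hscalar x
    refine ⟨x, y, hyx.symm, Set.ext fun z ↦ ⟨fun hz ↦ ?_, ?_⟩⟩
    · exact (sq_eq_add_mul_iff_of_ne hyx.symm (hroot x hx) (hroot y hy)).mp (hroot z hz)
    · rintro (rfl | rfl) <;> assumption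

end SelfAdjoint

lemma Matrix.IsHermitian.spectrum_eq_image_spectrum_real {𝕜 m : Type*} [RCLike 𝕜] [Fintype m]
    [DecidableEq m] {A : Matrix m m 𝕜} (hA : A.IsHermitian) :
    spectrum 𝕜 A = (↑) '' spectrum ℝ A := by
  rw [hA.spectrum_eq_image_range, hA.spectrum_real_eq_range_eigenvalues]

section Seidel

variable {𝕜 m : Type*} [RCLike 𝕜] [Fintype m] [DecidableEq m] {Q : Matrix m m 𝕜}

lemma Matrix.IsHermitian.trace_sq (hQ : Q.IsHermitian) :
    (Q ^ 2).trace = ∑ i, ∑ j, (‖Q i j‖ ^ 2 : 𝕜) := by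
  rw [sq]
  refine Finset.sum_congr rfl fun i _ ↦ Finset.sum_congr rfl fun j _ ↦ ?_
  dsimp only
  rw [← hQ.apply j i, RCLike.star_def, RCLike.mul_conj]

lemma trace_sq_of_seidel (hQ : Q.IsHermitian) (hdiag : ∀ i, Q i i = 0)
    (hoff : ∀ i j, i ≠ j → ‖Q i j‖ = 1) :
    (Q ^ 2).trace = Fintype.card m * (Fintype.card m - 1) := by
  have hnorm : ∀ i j, (‖Q i j‖ ^ 2 : 𝕜) = 1 - if i = j then 1 else 0 := by
    intro i j
    split_ifs with hij
    · simp [hij, hdiag]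
    · simp [hoff i j hij]
  simp [hQ.trace_sq, hnorm, Finset.sum_sub_distrib, mul_sub]

lemma eq_card_sub_one_of_seidel_sq_eq (hQ : Q.IsHermitian) (hdiag : ∀ i, Q i i = 0)
    (hoff : ∀ i j, i ≠ j → ‖Q i j‖ = 1) [Nonempty m] {e f : ℝ}
    (hquad : Q ^ 2 = algebraMap ℝ _ e + f • Q) : e = Fintype.card m - 1 := by
  have htrace := congrArg trace hquad
  rw [trace_sq_of_seidel hQ hdiag hoff] at htrace
  simp only [trace, diag_apply, Matrix.add_apply, algebraMap_matrix_apply, ↓reduceIte,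
    Matrix.smul_apply, hdiag, smul_zero, add_zero, Finset.sum_const, Finset.card_univ,
    nsmul_eq_mul, mul_eq_mul_left_iff, Nat.cast_eq_zero, Fintype.card_ne_zero, or_false] at htrace
  rw [← RCLike.ofReal_natCast, ← RCLike.ofReal_one, ← RCLike.ofReal_sub,
    RCLike.algebraMap_eq_ofReal, RCLike.ofReal_inj] at htrace
  exact htrace.symm

lemma seidel_ne_algebraMap (hoff : ∀ i j, i ≠ j → ‖Q i j‖ = 1) (hm : 1 < Fintype.card m)
    (r : ℝ) : Q ≠ algebraMap ℝ _ r := by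
  obtain ⟨i, j, hij⟩ := Fintype.exists_pair_of_one_lt_card hm
  intro hQ
  simpa [hQ, algebraMap_matrix_apply, hij] using hoff i j hij

end Seidel

/-- A Seidel (signature) matrix: self-adjoint, zero diagonal, off-diagonal
entries of modulus one.  It has two eigenvalues iff it satisfies a quadratic
equation `Q² = (n-1)I + μQ`. -/
theorem seidel_two_eigenvalues_iff
    (n : ℕ) (hn : 2 ≤ n) (Q : Matrix (Fin n) (Fin n) ℂ)
    (hherm : Q.IsHermitian)
    (hdiag : ∀ i, Q i i = 0)
    (hoff : ∀ i j, i ≠ j → ‖Q i j‖ = 1) :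
    (∃ μ : ℝ, Q ^ 2 = ((n : ℂ) - 1) • (1 : Matrix (Fin n) (Fin n) ℂ) + (μ : ℂ) • Q)
      ↔ (∃ a b : ℂ, a ≠ b ∧ spectrum ℂ Q = {a, b}) := by
  have hcard : 1 < Fintype.card (Fin n) := by rw [Fintype.card_fin]; omega
  have : Nonempty (Fin n) := ⟨⟨0, by omega⟩⟩
  have hscalars : ∀ μ : ℝ, ((n : ℂ) - 1) • (1 : Matrix (Fin n) (Fin n) ℂ) + (μ : ℂ) • Q =
      algebraMap ℝ _ ((n : ℝ) - 1) + μ • Q := by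
    intro μ
    rw [Algebra.algebraMap_eq_smul_one, ← Complex.coe_smul, ← Complex.coe_smul,
      Complex.ofReal_sub, Complex.ofReal_natCast, Complex.ofReal_one]
  simp only [hscalars]
  rw [hherm.spectrum_eq_image_spectrum_real,
    Set.exists_ne_image_eq_pair_iff RCLike.ofReal_injective,
    hherm.isSelfAdjoint.exists_spectrum_eq_pair_iff]
  constructor
  · rintro ⟨μ, hμ⟩
    exact ⟨⟨_, μ, hμ⟩, seidel_ne_algebraMap hoff hcard⟩
  · rintro ⟨⟨e, f, hquad⟩, -⟩
    obtain rfl := eq_card_sub_one_of_seidel_sq_eq hherm hdiag hoff hquad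
    exact ⟨f, by simpa using hquad⟩
end

section
/- Let ω = (−1 + i√3)/2 and let Q' be an n×n cube root Seidel matrix (n ≥ 1). Then there exists a function d : {1,…,n} → ℂ with |d_i| = 1 for all i such that the matrix Q defined by Q_{ij} = conj(d_i)·Q'_{ij}·d_j is a cube root Seidel matrix in standard form; moreover, for every real number μ, Q'² = (n−1)·I + μ·Q' holds if and only if Q² = (n−1)·I + μ·Q holds. -/
/-- `ω = (−1 + i√3)/2`, a primitive cube root of unity. -/
noncomputable def ω3 : ℂ := (-1 + Complex.I * Real.sqrt 3) / 2

/-- A cube root Seidel matrix: self-adjoint, zero diagonal, off-diagonal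
entries among the cube roots of unity. -/
def IsCubeRootSeidel {n : ℕ} (Q : Matrix (Fin n) (Fin n) ℂ) : Prop :=
  Q.IsHermitian ∧ (∀ i, Q i i = 0) ∧
    ∀ i j, i ≠ j → Q i j = 1 ∨ Q i j = ω3 ∨ Q i j = ω3 ^ 2

/-- Standard form: every off-diagonal entry in the first row and first column
equals 1. -/
def IsStandardForm {n : ℕ} (Q : Matrix (Fin n) (Fin n) ℂ) : Prop :=
  ∀ i j : Fin n, i ≠ j → (i.val = 0 ∨ j.val = 0) → Q i j = 1

lemma sqrt3_sq' : (Real.sqrt 3 : ℂ) ^ 2 = 3 := by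
  rw [← Complex.ofReal_pow, Real.sq_sqrt (by norm_num)]; norm_num

lemma ω3_quad : ω3 ^ 2 + ω3 + 1 = 0 := by
  unfold ω3
  linear_combination ((Real.sqrt 3 : ℂ)^2/4) * Complex.I_sq + (-(1:ℂ)/4) * sqrt3_sq'

lemma ω3_cube : ω3 ^ 3 = 1 := by
  linear_combination (ω3 - 1) * ω3_quad

lemma ω3_conj : (starRingEnd ℂ) ω3 = ω3 ^ 2 := by
  have h : (starRingEnd ℂ) ω3 = (-1 - Complex.I * Real.sqrt 3) / 2 := by
    simp [ω3, map_div₀, Complex.conj_I, map_ofNat]; ring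
  rw [h]; unfold ω3
  linear_combination (-(Real.sqrt 3 : ℂ)^2/4) * Complex.I_sq + ((1:ℂ)/4) * sqrt3_sq'

lemma ω3_norm : ‖ω3‖ = 1 := by
  have h : ω3 * (starRingEnd ℂ) ω3 = 1 := by
    rw [ω3_conj, ← pow_succ']; exact ω3_cube
  have h2 := congrArg (‖·‖) h
  simp only [norm_mul, RCLike.norm_conj, norm_one] at h2
  have := norm_nonneg ω3
  nlinarith

/-- The cube roots of unity predicate. -/
def IsCR (x : ℂ) : Prop := x = 1 ∨ x = ω3 ∨ x = ω3 ^ 2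

lemma isCR_conj {x : ℂ} (h : IsCR x) : IsCR ((starRingEnd ℂ) x) := by
  rcases h with h | h | h <;> subst h
  · left; exact map_one _
  · right; right; exact ω3_conj
  · right; left
    rw [map_pow, ω3_conj, ← pow_mul]
    linear_combination ω3 * ω3_cube

lemma isCR_mul {x y : ℂ} (hx : IsCR x) (hy : IsCR y) : IsCR (x * y) := by
  have h3 := ω3_cube
  rcases hx with h | h | h <;> rcases hy with h' | h' | h' <;> subst h <;> subst h' <;>
    unfold IsCR
  · left; ring
  · right; left; ring
  · right; right; ring
  · right; left; ring
  · right; right; ring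
  · left; linear_combination h3
  · right; right; ring
  · left; linear_combination h3
  · right; left; linear_combination ω3 * h3

lemma isCR_norm {x : ℂ} (h : IsCR x) : ‖x‖ = 1 := by
  rcases h with h | h | h <;> subst h
  · exact norm_one
  · exact ω3_norm
  · rw [norm_pow, ω3_norm]; norm_num

lemma isCR_mul_conj {x : ℂ} (h : IsCR x) : x * (starRingEnd ℂ) x = 1 := by
  have h2 := isCR_norm h
  rw [mul_comm, Complex.conj_mul']
  norm_num [h2]

lemma conj_sq_lemma {n : ℕ} (A D E : Matrix (Fin n) (Fin n) ℂ)
    (hDE : D * E = 1) (hED : E * D = 1) (c μ : ℂ)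
    (h : A ^ 2 = c • (1 : Matrix (Fin n) (Fin n) ℂ) + μ • A) :
    (E * A * D) ^ 2 = c • (1 : Matrix (Fin n) (Fin n) ℂ) + μ • (E * A * D) := by
  have key : (E * A * D) ^ 2 = E * A ^ 2 * D := by
    rw [pow_two, pow_two]
    calc E * A * D * (E * A * D) = E * (A * (D * E) * A) * D := by
          simp only [Matrix.mul_assoc]
      _ = E * (A * A) * D := by rw [hDE, Matrix.mul_one]
  rw [key, h, Matrix.mul_add, Matrix.add_mul, Matrix.mul_smul, Matrix.mul_smul,
    Matrix.smul_mul, Matrix.smul_mul, Matrix.mul_one, hED, Matrix.mul_assoc]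

open Matrix

theorem cubeRootSeidel_switching_to_standard_form
    (n : ℕ) (hn : 1 ≤ n) (Q' : Matrix (Fin n) (Fin n) ℂ)
    (hQ' : IsCubeRootSeidel Q') :
    ∃ d : Fin n → ℂ, (∀ i, ‖d i‖ = 1) ∧
      IsCubeRootSeidel (Matrix.of fun i j => (starRingEnd ℂ) (d i) * Q' i j * d j) ∧
      IsStandardForm (Matrix.of fun i j => (starRingEnd ℂ) (d i) * Q' i j * d j) ∧
      ∀ μ : ℝ,
        (Q' ^ 2 = ((n : ℂ) - 1) • (1 : Matrix (Fin n) (Fin n) ℂ) + (μ : ℂ) • Q') ↔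
        ((Matrix.of fun i j => (starRingEnd ℂ) (d i) * Q' i j * d j) ^ 2 =
          ((n : ℂ) - 1) • (1 : Matrix (Fin n) (Fin n) ℂ) +
            (μ : ℂ) • (Matrix.of fun i j => (starRingEnd ℂ) (d i) * Q' i j * d j)) := by
  obtain ⟨hherm, hdiag, hoff⟩ := hQ'
  set z : Fin n := ⟨0, hn⟩ with hz
  set d : Fin n → ℂ := fun j => if j = z then 1 else (starRingEnd ℂ) (Q' z j) with hd
  have hdz : d z = 1 := by rw [hd]; exact if_pos rfl
  have hdj : ∀ j, j ≠ z → d j = (starRingEnd ℂ) (Q' z j) := by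
    intro j hj; rw [hd]; exact if_neg hj
  have hCRd : ∀ j, IsCR (d j) := by
    intro j
    by_cases hj : j = z
    · rw [hj, hdz]; left; rfl
    · rw [hdj j hj]
      exact isCR_conj (hoff z j (fun h => hj h.symm))
  have hherm' : ∀ i j : Fin n, (starRingEnd ℂ) (Q' j i) = Q' i j := by
    intro i j
    have := congrFun (congrFun hherm i) j
    simpa [Matrix.conjTranspose_apply] using this
  refine ⟨d, fun i => isCR_norm (hCRd i), ?_, ?_, ?_⟩
  · refine ⟨?_, ?_, ?_⟩
    · ext i j
      simp only [Matrix.conjTranspose_apply, Matrix.of_apply, Complex.star_def,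
        _root_.map_mul, Complex.conj_conj]
      rw [hherm' i j]
      ring
    · intro i; simp [hdiag i]
    · intro i j hij
      exact isCR_mul (isCR_mul (isCR_conj (hCRd i)) (hoff i j hij)) (hCRd j)
  · intro i j hij h0
    have hz0 : ∀ k : Fin n, k.val = 0 → k = z := fun k hk => Fin.ext hk
    rcases h0 with h0 | h0
    · have hi : i = z := hz0 i h0
      subst hi
      have hjz : j ≠ z := fun h => hij h.symm
      simp only [Matrix.of_apply, hdz, hdj j hjz, _root_.map_one, one_mul]
      exact isCR_mul_conj (hoff z j hij)
    · have hj : j = z := hz0 j h0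
      subst hj
      simp only [Matrix.of_apply, hdz, hdj i hij, mul_one, Complex.conj_conj]
      rw [← hherm' i z]
      have := isCR_mul_conj (hoff z i (fun h => hij h.symm))
      linear_combination this
  · intro μ
    set D : Matrix (Fin n) (Fin n) ℂ := Matrix.diagonal d with hD
    have hQeq : (Matrix.of fun i j => (starRingEnd ℂ) (d i) * Q' i j * d j) =
        Dᴴ * Q' * D := by
      ext i j
      rw [hD, Matrix.diagonal_conjTranspose]
      simp [Matrix.mul_diagonal, Matrix.diagonal_mul, Complex.star_def, mul_assoc]
    have hunit : ∀ i, d i * (starRingEnd ℂ) (d i) = 1 := fun i => isCR_mul_conj (hCRd i)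
    have hDD : D * Dᴴ = 1 := by
      rw [hD, Matrix.diagonal_conjTranspose, Matrix.diagonal_mul_diagonal]
      ext i j
      rcases eq_or_ne i j with rfl | hij
      · simpa [Matrix.diagonal_apply_eq, Complex.star_def] using hunit i
      · simp [Matrix.diagonal_apply_ne _ hij, Matrix.one_apply_ne hij]
    have hDD' : Dᴴ * D = 1 := by
      rw [hD, Matrix.diagonal_conjTranspose, Matrix.diagonal_mul_diagonal]
      ext i j
      rcases eq_or_ne i j with rfl | hij
      · simpa [Matrix.diagonal_apply_eq, Complex.star_def, mul_comm] using hunit i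
      · simp [Matrix.diagonal_apply_ne _ hij, Matrix.one_apply_ne hij]
    rw [hQeq]
    constructor
    · intro h
      exact conj_sq_lemma Q' D Dᴴ hDD hDD' _ _ h
    · intro h
      have h2 := conj_sq_lemma (Dᴴ * Q' * D) Dᴴ D hDD' hDD _ _ h
      have heq : D * (Dᴴ * Q' * D) * Dᴴ = Q' := by
        calc D * (Dᴴ * Q' * D) * Dᴴ = (D * Dᴴ) * Q' * (D * Dᴴ) := by
              simp only [Matrix.mul_assoc]
          _ = Q' := by rw [hDD, Matrix.one_mul, Matrix.mul_one]
      rwa [heq] at h2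
end

section
/- Let ω = (−1 + i√3)/2 and let Q be an n×n cube root Seidel matrix in standard form satisfying Q² = (n−1)·I + μ·Q for a real number μ, and set e = (n − μ − 2)/3. Suppose i ≠ j are indices, both different from the first, with Q_{ij} = 1. With the path counts N_{x,y} := #{k : Q_{ik} = x and Q_{kj} = y} for x, y ∈ {1, ω, ω²}, and writing α' = N_{ω,ω²}, β' = N_{ω,ω}, γ' = N_{ω,1}, a' = N_{ω²,ω²}, b' = N_{ω²,ω}, c' = N_{ω²,1}, A' = N_{1,ω²}, B' = N_{1,ω}, C' = N_{1,1}, the following equations hold (as equalities of real numbers): α' = B'; β' = C' − μ; γ' = e + μ − B' − C'; a' = C' − μ; b' = e + μ − B' − C'; c' = B'; A' = e + μ − B' − C'. -/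
/-- The path count `N_{x,y}(i,j) = #{k : Q_{ik} = x and Q_{kj} = y}`,
regarded as a real number. -/
noncomputable def pathCount {n : ℕ} (Q : Matrix (Fin n) (Fin n) ℂ)
    (i j : Fin n) (x y : ℂ) : ℝ :=
  (Nat.card {k : Fin n // Q i k = x ∧ Q k j = y} : ℝ)



lemma hsum3 : ω3^2 + ω3 + 1 = 0 := by
  have hI : Complex.I^2 = -1 := Complex.I_sq
  have h3 : ((Real.sqrt 3 : ℝ) : ℂ)^2 = 3 := by
    rw [← Complex.ofReal_pow, Real.sq_sqrt (by norm_num : (3:ℝ) ≥ 0)]; norm_num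
  show ((-1 + Complex.I * Real.sqrt 3) / 2)^2 + (-1 + Complex.I * Real.sqrt 3) / 2 + 1 = 0
  linear_combination (((Real.sqrt 3:ℝ):ℂ)^2/4) * hI - (1/4) * h3

lemma hcube3 : ω3^3 = 1 := by linear_combination (ω3 - 1) * hsum3

lemma hne1 : ω3 ≠ 1 := by
  intro h
  have := hsum3
  rw [h] at this
  norm_num at this

lemma hne2 : ω3^2 ≠ 1 := by
  intro h
  have h2 : ω3 = -2 := by linear_combination hsum3 - h
  rw [h2] at h
  norm_num at h

lemma hne3 : ω3 ≠ ω3^2 := by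
  intro h
  have h2 : ω3 = -(1/2) := by linear_combination (1/2)*hsum3 + (1/2)*h
  have := hsum3
  rw [h2] at this
  norm_num at this

lemma hω0 : ω3 ≠ 0 := by
  intro h
  have := hcube3
  rw [h] at this
  norm_num at this

lemma hconj3 : (starRingEnd ℂ) ω3 = ω3^2 := by
  have hI : Complex.I^2 = -1 := Complex.I_sq
  have h3 : ((Real.sqrt 3 : ℝ) : ℂ)^2 = 3 := by
    rw [← Complex.ofReal_pow, Real.sq_sqrt (by norm_num : (3:ℝ) ≥ 0)]; norm_num
  have h1 : (starRingEnd ℂ) ω3 = (-1 - Complex.I * Real.sqrt 3) / 2 := by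
    simp [ω3, map_div₀, map_add, map_mul, Complex.conj_I, Complex.conj_ofReal, map_ofNat]
    ring
  rw [h1]
  show (-1 - Complex.I * Real.sqrt 3) / 2 = ((-1 + Complex.I * Real.sqrt 3) / 2)^2
  linear_combination (-(((Real.sqrt 3:ℝ):ℂ)^2)/4) * hI + (1/4) * h3

lemma ind3 (u x : ℂ) (hu : u = 1 ∨ u = ω3 ∨ u = ω3^2) (hx : x = 1 ∨ x = ω3 ∨ x = ω3^2) :
    (1 + u * x^2 + u^2 * x^4) = if u = x then 3 else 0 := by
  rcases hu with rfl | rfl | rfl <;> rcases hx with rfl | rfl | rfl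
  · rw [if_pos rfl]; norm_num
  · rw [if_neg (Ne.symm hne1)]
    linear_combination hsum3 + ω3 * hcube3
  · rw [if_neg (Ne.symm hne2)]
    linear_combination hsum3 + ω3 * hcube3 + ω3^2 * (ω3^3 + 1) * hcube3
  · rw [if_neg hne1]
    linear_combination hsum3
  · rw [if_pos rfl]
    linear_combination (ω3^3 + 2) * hcube3
  · rw [if_neg hne3]
    linear_combination hsum3 + ω3^2 * hcube3 + ω3 * (ω3^6 + ω3^3 + 1) * hcube3
  · rw [if_neg hne2]
    linear_combination hsum3 + ω3 * hcube3
  · rw [if_neg (Ne.symm hne3)]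
    linear_combination hsum3 + ω3 * hcube3 + ω3^2 * (ω3^3 + 1) * hcube3
  · rw [if_pos rfl]
    linear_combination ((ω3^3 + 1) + (ω3^9 + ω3^6 + ω3^3 + 1)) * hcube3

lemma root_sq_conj (u : ℂ) (hu : u = 1 ∨ u = ω3 ∨ u = ω3^2) : u^2 = (starRingEnd ℂ) u := by
  rcases hu with rfl | rfl | rfl
  · simp
  · rw [hconj3]
  · rw [map_pow, hconj3]

theorem cubeRootSeidel_one_entry_equations
    (n : ℕ) (Q : Matrix (Fin n) (Fin n) ℂ) (μ e : ℝ)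
    (hQ : IsCubeRootSeidel Q) (hsf : IsStandardForm Q)
    (heq : Q ^ 2 = ((n : ℂ) - 1) • (1 : Matrix (Fin n) (Fin n) ℂ) + (μ : ℂ) • Q)
    (he : e = ((n : ℝ) - μ - 2) / 3)
    (i j : Fin n) (hij : i ≠ j) (hi : i.val ≠ 0) (hj : j.val ≠ 0)
    (h1 : Q i j = 1) :
    pathCount Q i j ω3 (ω3 ^ 2) = pathCount Q i j 1 ω3 ∧
    pathCount Q i j ω3 ω3 = pathCount Q i j 1 1 - μ ∧
    pathCount Q i j ω3 1 = e + μ - pathCount Q i j 1 ω3 - pathCount Q i j 1 1 ∧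
    pathCount Q i j (ω3 ^ 2) (ω3 ^ 2) = pathCount Q i j 1 1 - μ ∧
    pathCount Q i j (ω3 ^ 2) ω3 = e + μ - pathCount Q i j 1 ω3 - pathCount Q i j 1 1 ∧
    pathCount Q i j (ω3 ^ 2) 1 = pathCount Q i j 1 ω3 ∧
    pathCount Q i j 1 (ω3 ^ 2) = e + μ - pathCount Q i j 1 ω3 - pathCount Q i j 1 1 := by
  classical
  obtain ⟨hherm, hdiag, hroot⟩ := hQ
  have hn : 2 ≤ n := by have := i.isLt; omega
  set z : Fin n := ⟨0, by omega⟩ with hz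
  have hiz : i ≠ z := fun h => hi (by rw [h])
  have hjz : j ≠ z := fun h => hj (by rw [h])
  have hQz : ∀ a : Fin n, a ≠ z → Q a z = 1 := fun a ha => hsf a z ha (Or.inr rfl)
  have hherm' : ∀ a b : Fin n, Q b a = (starRingEnd ℂ) (Q a b) := by
    intro a b
    simpa [Complex.star_def] using (hherm.apply b a).symm
  have hQji : Q j i = 1 := by rw [hherm' i j, h1, map_one]
  -- row sums
  have hrow : ∀ a : Fin n, a ≠ z → ∑ k, Q a k = (μ : ℂ) + 1 := by
    intro a ha
    have h2 := congrFun (congrFun heq a) z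
    rw [pow_two, Matrix.mul_apply, Matrix.add_apply, Matrix.smul_apply, Matrix.smul_apply,
      Matrix.one_apply_ne ha, hQz a ha] at h2
    have hpt : ∀ k : Fin n, Q a k * Q k z = Q a k - (if k = z then Q a z else 0) := by
      intro k
      by_cases hk : k = z
      · subst hk; rw [if_pos rfl, hdiag, hQz a ha]; ring
      · rw [if_neg hk, hQz k hk]; ring
    rw [Finset.sum_congr rfl (fun k _ => hpt k), Finset.sum_sub_distrib,
      Finset.sum_ite_eq' Finset.univ z (fun _ => Q a z), if_pos (Finset.mem_univ z),
      hQz a ha] at h2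
    simp only [smul_eq_mul] at h2
    linear_combination h2
  have hcol : ∀ a : Fin n, a ≠ z → ∑ k, Q k a = (μ : ℂ) + 1 := by
    intro a ha
    have : ∑ k, Q k a = (starRingEnd ℂ) (∑ k, Q a k) := by
      rw [map_sum]
      exact Finset.sum_congr rfl fun k _ => hherm' a k
    rw [this, hrow a ha, map_add, map_one, Complex.conj_ofReal]
  -- the index set T
  set T : Finset (Fin n) := Finset.univ \ {i, j} with hT
  have hmemT : ∀ k : Fin n, k ∈ T ↔ k ≠ i ∧ k ≠ j := by
    intro k; simp [hT]
  have hcardT : (T.card : ℂ) = (n : ℂ) - 2 := by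
    have : T.card = n - 2 := by
      rw [hT, Finset.card_sdiff_of_subset (Finset.subset_univ _), Finset.card_pair hij,
        Finset.card_univ, Fintype.card_fin]
    rw [this]
    push_cast [Nat.cast_sub hn]
    ring
  have hTsum : ∀ f : Fin n → ℂ, ∑ k ∈ T, f k = (∑ k, f k) - f i - f j := by
    intro f
    have h := Finset.sum_sdiff (Finset.subset_univ ({i, j} : Finset (Fin n))) (f := f)
    rw [Finset.sum_pair hij] at h
    rw [hT]
    linear_combination h
  -- the seven known power sums
  have hP10 : ∑ k ∈ T, Q i k = (μ : ℂ) := by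
    rw [hTsum, hrow i hiz, hdiag i, h1]; ring
  have hP01 : ∑ k ∈ T, Q k j = (μ : ℂ) := by
    rw [hTsum, hcol j hjz, h1, hdiag j]; ring
  have hP20 : ∑ k ∈ T, (Q i k)^2 = (μ : ℂ) := by
    have hpt : ∑ k ∈ T, (Q i k)^2 = ∑ k ∈ T, Q k i := by
      refine Finset.sum_congr rfl fun k hk => ?_
      obtain ⟨hki, _⟩ := (hmemT k).1 hk
      rw [root_sq_conj _ (hroot i k (Ne.symm hki)), ← hherm' i k]
    rw [hpt, hTsum, hcol i hiz, hdiag i, hQji]; ring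
  have hP02 : ∑ k ∈ T, (Q k j)^2 = (μ : ℂ) := by
    have hpt : ∑ k ∈ T, (Q k j)^2 = ∑ k ∈ T, Q j k := by
      refine Finset.sum_congr rfl fun k hk => ?_
      obtain ⟨_, hkj⟩ := (hmemT k).1 hk
      rw [root_sq_conj _ (hroot k j hkj), ← hherm' k j]
    rw [hpt, hTsum, hrow j hjz, hQji, hdiag j]; ring
  have hsq : ∀ a b : Fin n, a ≠ b → ∑ k, Q a k * Q k b = (μ : ℂ) * Q a b := by
    intro a b hab
    have h2 := congrFun (congrFun heq a) b
    rw [pow_two, Matrix.mul_apply, Matrix.add_apply, Matrix.smul_apply, Matrix.smul_apply,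
      Matrix.one_apply_ne hab] at h2
    simp only [smul_eq_mul] at h2
    linear_combination h2
  have hP11 : ∑ k ∈ T, Q i k * Q k j = (μ : ℂ) := by
    rw [hTsum, hsq i j hij, h1, hdiag i, hdiag j]; ring
  have hP22 : ∑ k ∈ T, (Q i k)^2 * (Q k j)^2 = (μ : ℂ) := by
    have hpt : ∑ k ∈ T, (Q i k)^2 * (Q k j)^2 = ∑ k ∈ T, Q j k * Q k i := by
      refine Finset.sum_congr rfl fun k hk => ?_
      obtain ⟨hki, hkj⟩ := (hmemT k).1 hk
      rw [root_sq_conj _ (hroot i k (Ne.symm hki)), root_sq_conj _ (hroot k j hkj),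
        ← hherm' i k, ← hherm' k j]
      ring
    rw [hpt, hTsum, hsq j i (Ne.symm hij), hQji, hdiag i, hdiag j]; ring
  -- the two free power sums
  set p : ℂ := ∑ k ∈ T, Q i k * (Q k j)^2 with hp
  set q : ℂ := ∑ k ∈ T, (Q i k)^2 * Q k j with hq
  -- the key expansion
  have key : ∀ x y : ℂ, (x = 1 ∨ x = ω3 ∨ x = ω3^2) → (y = 1 ∨ y = ω3 ∨ y = ω3^2) →
      ((T.filter fun k => Q i k = x ∧ Q k j = y).card : ℂ) * 9 =
      ((n : ℂ) - 2) + (μ : ℂ) * (x^2 + x^4 + y^2 + y^4 + x^2*y^2 + x^4*y^4)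
        + x^2*y^4 * p + x^4*y^2 * q := by
    intro x y hx hy
    have step1 : ∑ k ∈ T, (1 + Q i k * x^2 + (Q i k)^2 * x^4) * (1 + Q k j * y^2 + (Q k j)^2 * y^4)
        = ∑ k ∈ T, (if Q i k = x ∧ Q k j = y then (9:ℂ) else 0) := by
      refine Finset.sum_congr rfl fun k hk => ?_
      obtain ⟨hki, hkj⟩ := (hmemT k).1 hk
      rw [ind3 _ _ (hroot i k (Ne.symm hki)) hx, ind3 _ _ (hroot k j hkj) hy]
      by_cases h : Q i k = x <;> by_cases h' : Q k j = y <;> simp [h, h'] <;> norm_num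
    have step2 : ∑ k ∈ T, (if Q i k = x ∧ Q k j = y then (9:ℂ) else 0)
        = ((T.filter fun k => Q i k = x ∧ Q k j = y).card : ℂ) * 9 := by
      rw [← Finset.sum_filter, Finset.sum_const, nsmul_eq_mul]
    have expand : ∀ k : Fin n, (1 + Q i k * x^2 + (Q i k)^2 * x^4) * (1 + Q k j * y^2 + (Q k j)^2 * y^4)
        = 1 + (Q k j) * y^2 + ((Q k j)^2) * y^4 + (Q i k) * x^2
          + (Q i k * Q k j) * (x^2*y^2) + (Q i k * (Q k j)^2) * (x^2*y^4)
          + ((Q i k)^2) * x^4 + ((Q i k)^2 * Q k j) * (x^4*y^2)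
          + ((Q i k)^2 * (Q k j)^2) * (x^4*y^4) := fun k => by ring
    rw [← step2, ← step1, Finset.sum_congr rfl fun k _ => expand k]
    simp only [Finset.sum_add_distrib, ← Finset.sum_mul, Finset.sum_const, nsmul_eq_mul, mul_one]
    rw [hP01, hP02, hP10, hP11, hP20, hP22, hcardT, ← hp, ← hq]
    ring
  -- translate pathCount to filter cards
  have hpc : ∀ x y : ℂ, x ≠ 0 → y ≠ 0 →
      pathCount Q i j x y = ((T.filter fun k => Q i k = x ∧ Q k j = y).card : ℝ) := by
    intro x y hx hy
    have hset : (Finset.univ.filter fun k => Q i k = x ∧ Q k j = y)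
        = T.filter fun k => Q i k = x ∧ Q k j = y := by
      ext k
      simp only [Finset.mem_filter, Finset.mem_univ, true_and]
      constructor
      · rintro ⟨ha, hb⟩
        refine ⟨(hmemT k).2 ⟨?_, ?_⟩, ha, hb⟩
        · intro hk; subst hk; rw [hdiag] at ha; exact hx ha.symm
        · intro hk; subst hk; rw [hdiag] at hb; exact hy hb.symm
      · rintro ⟨-, ha, hb⟩; exact ⟨ha, hb⟩
    rw [pathCount, Nat.card_eq_fintype_card, Fintype.card_subtype, hset]
  have hω20 : (ω3^2 : ℂ) ≠ 0 := pow_ne_zero 2 hω0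
  have hx1 : (1:ℂ) = 1 ∨ (1:ℂ) = ω3 ∨ (1:ℂ) = ω3^2 := Or.inl rfl
  have hxw : ω3 = 1 ∨ ω3 = ω3 ∨ ω3 = ω3^2 := Or.inr (Or.inl rfl)
  have hxw2 : ω3^2 = 1 ∨ ω3^2 = ω3 ∨ ω3^2 = ω3^2 := Or.inr (Or.inr rfl)
  have heC : (e:ℂ) = ((n:ℂ) - (μ:ℂ) - 2)/3 := by rw [he]; push_cast; ring
  have k11 := key 1 1 hx1 hx1
  have k1w := key 1 ω3 hx1 hxw
  have k1w2 := key 1 (ω3^2) hx1 hxw2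
  have kw1 := key ω3 1 hxw hx1
  have kww := key ω3 ω3 hxw hxw
  have kww2 := key ω3 (ω3^2) hxw hxw2
  have kw21 := key (ω3^2) 1 hxw2 hx1
  have kw2w := key (ω3^2) ω3 hxw2 hxw
  have kw2w2 := key (ω3^2) (ω3^2) hxw2 hxw2
  refine ⟨?_, ?_, ?_, ?_, ?_, ?_, ?_⟩
  · rw [hpc ω3 (ω3^2) hω0 hω20, hpc 1 ω3 one_ne_zero hω0]
    have hc : (((T.filter fun k => Q i k = ω3 ∧ Q k j = ω3^2).card : ℕ) : ℂ)
        = (((T.filter fun k => Q i k = 1 ∧ Q k j = ω3).card : ℕ) : ℂ) := by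
      linear_combination (1/9)*kww2 - (1/9)*k1w + (1/9)*(((-2)*(μ:ℂ)) + ((2)*(μ:ℂ))*ω3 + ((-1)*(μ:ℂ) + (-1)*q)*ω3^2 + ((-1)*(μ:ℂ) + q)*ω3^3 + ((2)*(μ:ℂ) + (-1)*p)*ω3^4 + ((-1)*(μ:ℂ) + p + (-1)*q)*ω3^5 + (q)*ω3^6 + ((μ:ℂ) + (-1)*p)*ω3^7 + (p)*ω3^8 + ((-1)*(μ:ℂ))*ω3^9 + ((μ:ℂ))*ω3^10)*hsum3
    exact_mod_cast hc
  · rw [hpc ω3 ω3 hω0 hω0, hpc 1 1 one_ne_zero one_ne_zero]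
    have hc : (((T.filter fun k => Q i k = ω3 ∧ Q k j = ω3).card : ℕ) : ℂ)
        = (((T.filter fun k => Q i k = 1 ∧ Q k j = 1).card : ℕ) : ℂ) - (μ:ℂ) := by
      linear_combination (1/9)*kww - (1/9)*k11 + (1/9)*(((3)*(μ:ℂ) + (-1)*p + (-1)*q) + ((-3)*(μ:ℂ) + p + q)*ω3 + ((2)*(μ:ℂ))*ω3^2 + ((μ:ℂ) + (-1)*p + (-1)*q)*ω3^3 + (p + q)*ω3^4 + ((-1)*(μ:ℂ))*ω3^5 + ((μ:ℂ))*ω3^6)*hsum3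
    exact_mod_cast hc
  · rw [hpc ω3 1 hω0 one_ne_zero, hpc 1 ω3 one_ne_zero hω0, hpc 1 1 one_ne_zero one_ne_zero]
    have hc : (((T.filter fun k => Q i k = ω3 ∧ Q k j = 1).card : ℕ) : ℂ)
        = (e:ℂ) + (μ:ℂ) - (((T.filter fun k => Q i k = 1 ∧ Q k j = ω3).card : ℕ) : ℂ)
          - (((T.filter fun k => Q i k = 1 ∧ Q k j = 1).card : ℕ) : ℂ) := by
      rw [heC]
      linear_combination (1/9)*kw1 + (1/9)*k1w + (1/9)*k11 + (1/9)*(((4)*(μ:ℂ) + p + q) + ((-4)*(μ:ℂ) + (-1)*q + (-1)*p)*ω3 + ((4)*(μ:ℂ) + q + p)*ω3^2)*hsum3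
    exact_mod_cast hc
  · rw [hpc (ω3^2) (ω3^2) hω20 hω20, hpc 1 1 one_ne_zero one_ne_zero]
    have hc : (((T.filter fun k => Q i k = ω3^2 ∧ Q k j = ω3^2).card : ℕ) : ℂ)
        = (((T.filter fun k => Q i k = 1 ∧ Q k j = 1).card : ℕ) : ℂ) - (μ:ℂ) := by
      linear_combination (1/9)*kw2w2 - (1/9)*k11 + (1/9)*(((3)*(μ:ℂ) + (-1)*p + (-1)*q) + ((-3)*(μ:ℂ) + p + q)*ω3 + ((3)*(μ:ℂ) + (-1)*p + (-1)*q)*ω3^3 + ((-1)*(μ:ℂ) + p + q)*ω3^4 + ((-2)*(μ:ℂ))*ω3^5 + ((3)*(μ:ℂ) + (-1)*p + (-1)*q)*ω3^6 + (p + q + (-1)*(μ:ℂ))*ω3^7 + ((μ:ℂ))*ω3^8 + ((-1)*p + (-1)*q)*ω3^9 + (p + q + (-1)*(μ:ℂ))*ω3^10 + ((μ:ℂ))*ω3^11 + ((-1)*(μ:ℂ))*ω3^13 + ((μ:ℂ))*ω3^14)*hsum3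
    exact_mod_cast hc
  · rw [hpc (ω3^2) ω3 hω20 hω0, hpc 1 ω3 one_ne_zero hω0, hpc 1 1 one_ne_zero one_ne_zero]
    have hc : (((T.filter fun k => Q i k = ω3^2 ∧ Q k j = ω3).card : ℕ) : ℂ)
        = (e:ℂ) + (μ:ℂ) - (((T.filter fun k => Q i k = 1 ∧ Q k j = ω3).card : ℕ) : ℂ)
          - (((T.filter fun k => Q i k = 1 ∧ Q k j = 1).card : ℕ) : ℂ) := by
      rw [heC]
      linear_combination (1/9)*kw2w + (1/9)*k1w + (1/9)*k11 + (1/9)*(((2)*(μ:ℂ) + q + p) + ((-2)*(μ:ℂ) + (-1)*p + (-1)*q)*ω3 + ((3)*(μ:ℂ) + q)*ω3^2 + ((-1)*(μ:ℂ) + p)*ω3^3 + ((2)*(μ:ℂ) + (-1)*q)*ω3^4 + ((-1)*(μ:ℂ) + q + (-1)*p)*ω3^5 + (p)*ω3^6 + ((μ:ℂ) + (-1)*q)*ω3^7 + (q)*ω3^8 + ((-1)*(μ:ℂ))*ω3^9 + ((μ:ℂ))*ω3^10)*hsum3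
    exact_mod_cast hc
  · rw [hpc (ω3^2) 1 hω20 one_ne_zero, hpc 1 ω3 one_ne_zero hω0]
    have hc : (((T.filter fun k => Q i k = ω3^2 ∧ Q k j = 1).card : ℕ) : ℂ)
        = (((T.filter fun k => Q i k = 1 ∧ Q k j = ω3).card : ℕ) : ℂ) := by
      linear_combination (1/9)*kw21 - (1/9)*k1w + (1/9)*(((-2)*(μ:ℂ) + (-1)*q)*ω3^2 + ((2)*(μ:ℂ) + q)*ω3^3 + ((-2)*(μ:ℂ) + (-1)*q)*ω3^5 + ((2)*(μ:ℂ) + q)*ω3^6)*hsum3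
    exact_mod_cast hc
  · rw [hpc 1 (ω3^2) one_ne_zero hω20, hpc 1 ω3 one_ne_zero hω0, hpc 1 1 one_ne_zero one_ne_zero]
    have hc : (((T.filter fun k => Q i k = 1 ∧ Q k j = ω3^2).card : ℕ) : ℂ)
        = (e:ℂ) + (μ:ℂ) - (((T.filter fun k => Q i k = 1 ∧ Q k j = ω3).card : ℕ) : ℂ)
          - (((T.filter fun k => Q i k = 1 ∧ Q k j = 1).card : ℕ) : ℂ) := by
      rw [heC]
      linear_combination (1/9)*k1w2 + (1/9)*k1w + (1/9)*k11 + (1/9)*(((4)*(μ:ℂ) + q + p) + ((-4)*(μ:ℂ) + (-1)*p + (-1)*q)*ω3 + ((2)*(μ:ℂ) + q)*ω3^2 + ((2)*(μ:ℂ) + p)*ω3^3 + ((-2)*(μ:ℂ) + (-1)*p)*ω3^5 + ((2)*(μ:ℂ) + p)*ω3^6)*hsum3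
    exact_mod_cast hc
end

section
/- Let ω = (−1 + i√3)/2 and let Q be an n×n nontrivial cube root Seidel matrix in standard form satisfying Q² = (n−1)·I + μ·Q for a real number μ. Then n ≡ 0 (mod 3). -/
/-- Nontrivial: some off-diagonal entry is not equal to 1. -/
def IsNontrivial {n : ℕ} (Q : Matrix (Fin n) (Fin n) ℂ) : Prop :=
  ∃ i j : Fin n, i ≠ j ∧ Q i j ≠ 1

namespace CubeRootSeidelAux

lemma w_re : ω3.re = -(1/2) := by
  simp [ω3, Complex.div_re]; norm_num
lemma w_im : ω3.im = Real.sqrt 3 / 2 := by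
  simp [ω3, Complex.div_im]
lemma hmin : ω3 ^ 2 + ω3 + 1 = 0 := by
  apply Complex.ext <;>
    simp [pow_two, Complex.mul_re, Complex.mul_im, w_re, w_im] <;> ring_nf <;>
    nlinarith [Real.sq_sqrt (by norm_num : (3:ℝ) ≥ 0), Real.sqrt_nonneg 3]
lemma h3 : ω3 ^ 3 = 1 := by linear_combination (ω3 - 1) * hmin
lemma sqrt3_pos : (0:ℝ) < Real.sqrt 3 := Real.sqrt_pos.2 (by norm_num)
lemma w_ne_one : ω3 ≠ 1 := by
  intro h
  have := congrArg Complex.im h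
  rw [w_im] at this
  simp at this
  try nlinarith [sqrt3_pos]
lemma w2_eq : ω3 ^ 2 = -1 - ω3 := by linear_combination hmin
lemma w2_re : (ω3 ^ 2).re = -(1/2) := by rw [w2_eq]; simp [w_re]; norm_num
lemma w2_im : (ω3 ^ 2).im = -(Real.sqrt 3 / 2) := by rw [w2_eq]; simp [w_im]
lemma w2_ne_one : ω3 ^ 2 ≠ 1 := by
  intro h
  have := congrArg Complex.im h
  rw [w2_im] at this
  simp at this
  try nlinarith [sqrt3_pos]
lemma w2_ne_w : ω3 ^ 2 ≠ ω3 := by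
  intro h
  have := congrArg Complex.im h
  rw [w2_im, w_im] at this
  nlinarith [sqrt3_pos]

open scoped Classical in
noncomputable def qe (z : ℂ) : ℤ := if z = 1 then 0 else if z = ω3 then 1 else -1
open scoped Classical in
noncomputable def pe (z : ℂ) : ℤ := if z = 1 then 1 else if z = ω3 then 0 else -1

lemma qe_one : qe 1 = 0 := by simp [qe]
lemma qe_w : qe ω3 = 1 := by simp [qe, w_ne_one]
lemma qe_w2 : qe (ω3 ^ 2) = -1 := by simp only [qe]; rw [if_neg w2_ne_one, if_neg w2_ne_w]
lemma pe_one : pe 1 = 1 := by simp [pe]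
lemma pe_w : pe ω3 = 0 := by simp [pe, w_ne_one]
lemma pe_w2 : pe (ω3 ^ 2) = -1 := by simp only [pe]; rw [if_neg w2_ne_one, if_neg w2_ne_w]

def C (z : ℂ) : Prop := z = 1 ∨ z = ω3 ∨ z = ω3 ^ 2

lemma im_of_C {z : ℂ} (h : C z) : z.im = (qe z : ℝ) * (Real.sqrt 3 / 2) := by
  rcases h with h | h | h <;> subst h <;>
    simp [qe_one, qe_w, qe_w2, w_im, w2_im]
lemma re_of_C {z : ℂ} (h : C z) : z.re = (pe z : ℝ) - (qe z : ℝ) / 2 := by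
  rcases h with h | h | h <;> subst h
  · rw [pe_one, qe_one]; norm_num
  · rw [pe_w, qe_w, w_re]; norm_num
  · rw [pe_w2, qe_w2, w2_re]; norm_num

lemma pe_mod {z : ℂ} (h : C z) : ((pe z : ZMod 3)) = 1 - ((qe z : ℤ) : ZMod 3) := by
  rcases h with h | h | h <;> subst h
  · rw [pe_one, qe_one]; decide
  · rw [pe_w, qe_w]; decide
  · rw [pe_w2, qe_w2]; decide

lemma C_mul {z w : ℂ} (hz : C z) (hw : C w) : C (z * w) := by
  rcases hz with h | h | h <;> rcases hw with h' | h' | h' <;> subst h <;> subst h' <;>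
    simp [C] <;> first
    | (right; left; linear_combination ω3 * h3)
    | (left; linear_combination h3)
    | (right; right; ring)

lemma mul_ww : ω3 * ω3 = ω3 ^ 2 := by ring
lemma mul_ww2 : ω3 * ω3 ^ 2 = 1 := by linear_combination h3
lemma mul_w2w : ω3 ^ 2 * ω3 = 1 := by linear_combination h3
lemma mul_w2w2 : ω3 ^ 2 * ω3 ^ 2 = ω3 := by linear_combination ω3 * h3

lemma qe_mul_mod {z w : ℂ} (hz : C z) (hw : C w) :
    ((qe (z * w) : ℤ) : ZMod 3) = (qe z : ZMod 3) + (qe w : ZMod 3) := by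
  rcases hz with h | h | h <;> rcases hw with h' | h' | h' <;> subst h <;> subst h'
  · rw [one_mul]; push_cast [qe_one]; ring
  · rw [one_mul]; push_cast [qe_one]; ring
  · rw [one_mul]; push_cast [qe_one]; ring
  · rw [mul_one]; push_cast [qe_one]; ring
  · rw [mul_ww]; rw [qe_w, qe_w2]; decide
  · rw [mul_ww2]; rw [qe_one, qe_w, qe_w2]; decide
  · rw [mul_one]; push_cast [qe_one]; ring
  · rw [mul_w2w]; rw [qe_one, qe_w, qe_w2]; decide
  · rw [mul_w2w2]; rw [qe_w, qe_w2]; decide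

/-- extract the integer ω3-coefficient of a sum of cube roots of unity -/
lemma sum_qe_of_im {α : Type*} {s : Finset α} {f : α → ℂ} (hf : ∀ k ∈ s, C (f k)) {r : ℝ}
    (h : (∑ k ∈ s, f k).im = r * (Real.sqrt 3 / 2)) :
    ((∑ k ∈ s, qe (f k) : ℤ) : ℝ) = r := by
  rw [Complex.im_sum] at h
  rw [Finset.sum_congr rfl (fun k hk => im_of_C (hf k hk))] at h
  rw [← Finset.sum_mul] at h
  have h2 : (0:ℝ) < Real.sqrt 3 / 2 := by positivity
  have := mul_right_cancel₀ (ne_of_gt h2) h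
  push_cast at this ⊢
  exact this

lemma sum_pe_of_re {α : Type*} {s : Finset α} {f : α → ℂ} (hf : ∀ k ∈ s, C (f k)) {u v : ℝ}
    (h : (∑ k ∈ s, f k).re = u - v / 2) (hq : ((∑ k ∈ s, qe (f k) : ℤ) : ℝ) = v) :
    ((∑ k ∈ s, pe (f k) : ℤ) : ℝ) = u := by
  rw [Complex.re_sum] at h
  rw [Finset.sum_congr rfl (fun k hk => re_of_C (hf k hk))] at h
  rw [Finset.sum_sub_distrib] at h
  push_cast at hq ⊢
  rw [← Finset.sum_div, hq] at h
  linarith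

end CubeRootSeidelAux

open CubeRootSeidelAux Finset

theorem cubeRootSeidel_n_mod_three
    (n : ℕ) (Q : Matrix (Fin n) (Fin n) ℂ) (μ : ℝ)
    (hQ : IsCubeRootSeidel Q) (hsf : IsStandardForm Q) (hnt : IsNontrivial Q)
    (heq : Q ^ 2 = ((n : ℂ) - 1) • (1 : Matrix (Fin n) (Fin n) ℂ) + (μ : ℂ) • Q) :
    n % 3 = 0 := by
  classical
  obtain ⟨hherm, hdiag, hC⟩ := hQ
  obtain ⟨i, j, hij, hQij⟩ := hnt
  have hn : 0 < n := i.pos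
  set z0 : Fin n := ⟨0, hn⟩ with hz0def
  have hiz : i ≠ z0 := fun h => hQij (hsf i j hij (Or.inl (by rw [h])))
  have hjz : j ≠ z0 := fun h => hQij (hsf i j hij (Or.inr (by rw [h])))
  -- entrywise equation
  have key : ∀ a b : Fin n, a ≠ b → (∑ k, Q a k * Q k b) = (μ : ℂ) * Q a b := by
    intro a b hab
    have h := Matrix.ext_iff.2 heq a b
    rw [pow_two, Matrix.mul_apply] at h
    rw [h]
    simp [Matrix.add_apply, Matrix.smul_apply, Matrix.one_apply_ne hab, smul_eq_mul]
  set t : Finset (Fin n) := Finset.univ.erase z0 with htdef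
  -- column sums
  have colC : ∀ b : Fin n, b ≠ z0 → (∑ k ∈ t.erase b, Q k b) = (μ : ℂ) := by
    intro b hb
    have h := key z0 b (Ne.symm hb)
    rw [hsf z0 b (Ne.symm hb) (Or.inl rfl), mul_one] at h
    have hbmem : b ∈ t := Finset.mem_erase.2 ⟨hb, Finset.mem_univ b⟩
    rw [← Finset.sum_erase_add _ _ (Finset.mem_univ z0), ← htdef,
      ← Finset.sum_erase_add _ _ hbmem] at h
    rw [hdiag z0, hdiag b, mul_zero, zero_mul, add_zero, add_zero] at h
    rw [← h]
    refine Finset.sum_congr rfl fun k hk => ?_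
    have hk2 := Finset.mem_erase.1 (Finset.mem_erase.1 hk).2
    rw [hsf z0 k (Ne.symm hk2.1) (Or.inl rfl), one_mul]
  -- row sums
  have rowC : ∀ a : Fin n, a ≠ z0 → (∑ k ∈ t.erase a, Q a k) = (μ : ℂ) := by
    intro a ha
    have h := key a z0 ha
    rw [hsf a z0 ha (Or.inr rfl), mul_one] at h
    have hamem : a ∈ t := Finset.mem_erase.2 ⟨ha, Finset.mem_univ a⟩
    rw [← Finset.sum_erase_add _ _ (Finset.mem_univ z0), ← htdef,
      ← Finset.sum_erase_add _ _ hamem] at h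
    rw [hdiag z0, hdiag a, mul_zero, zero_mul, add_zero, add_zero] at h
    rw [← h]
    refine Finset.sum_congr rfl fun k hk => ?_
    have hk2 := Finset.mem_erase.1 (Finset.mem_erase.1 hk).2
    rw [hsf k z0 hk2.1 (Or.inr rfl), mul_one]
  -- C-membership of column/row entries
  have hCcol : ∀ b : Fin n, ∀ k ∈ t.erase b, C (Q k b) := by
    intro b k hk
    exact hC k b (Finset.mem_erase.1 hk).1
  have hCrow : ∀ a : Fin n, ∀ k ∈ t.erase a, C (Q a k) := by
    intro a k hk
    exact (hC a k (Ne.symm (Finset.mem_erase.1 hk).1))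
  -- integer column sums of qe are zero
  have colq : ∀ b : Fin n, b ≠ z0 → (∑ k ∈ t.erase b, qe (Q k b)) = 0 := by
    intro b hb
    have him : (∑ k ∈ t.erase b, Q k b).im = (0:ℝ) * (Real.sqrt 3 / 2) := by
      rw [colC b hb]; simp
    have := sum_qe_of_im (hCcol b) him
    exact_mod_cast this
  have rowq : ∀ a : Fin n, a ≠ z0 → (∑ k ∈ t.erase a, qe (Q a k)) = 0 := by
    intro a ha
    have him : (∑ k ∈ t.erase a, Q a k).im = (0:ℝ) * (Real.sqrt 3 / 2) := by
      rw [rowC a ha]; simp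
    have := sum_qe_of_im (hCrow a) him
    exact_mod_cast this
  -- the integer M with μ = M
  set M : ℤ := ∑ k ∈ t.erase j, pe (Q k j) with hMdef
  have hq0r : ((∑ k ∈ t.erase j, qe (Q k j) : ℤ) : ℝ) = (0:ℝ) := by
    rw [colq j hjz]; simp
  have hre0 : (∑ k ∈ t.erase j, Q k j).re = μ - (0:ℝ) / 2 := by
    rw [colC j hjz]; simp
  have hM : (M : ℝ) = μ := sum_pe_of_re (hCcol j) hre0 hq0r
  -- cardinality
  have hcard : (t.erase j).card = n - 2 := by
    have h1 : t.card = n - 1 := by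
      rw [htdef, Finset.card_erase_of_mem (Finset.mem_univ z0), Finset.card_univ,
        Fintype.card_fin]
    rw [Finset.card_erase_of_mem (Finset.mem_erase.2 ⟨hjz, Finset.mem_univ j⟩), h1]
    omega
  have hn3 : 3 ≤ n := by
    have h1 : i.val ≠ 0 := fun h => hiz (Fin.ext h)
    have h2 : j.val ≠ 0 := fun h => hjz (Fin.ext h)
    have h3 : i.val ≠ j.val := fun h => hij (Fin.ext h)
    have := i.isLt; have := j.isLt
    omega
  -- M ≡ n - 2 (mod 3)
  have hMn : (M : ZMod 3) = (n : ZMod 3) - 2 := by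
    have : (M : ZMod 3) = ∑ k ∈ t.erase j, ((pe (Q k j) : ℤ) : ZMod 3) := by
      rw [hMdef]; push_cast; rfl
    rw [this, Finset.sum_congr rfl (fun k hk => pe_mod (hCcol j k hk)),
      Finset.sum_sub_distrib, Finset.sum_const, hcard]
    have hq0 : (∑ k ∈ t.erase j, ((qe (Q k j) : ℤ) : ZMod 3)) = 0 := by
      have : (∑ k ∈ t.erase j, ((qe (Q k j) : ℤ) : ZMod 3))
          = ((∑ k ∈ t.erase j, qe (Q k j) : ℤ) : ZMod 3) := by push_cast; rfl
      rw [this, colq j hjz]; simp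
    rw [hq0, sub_zero, nsmul_eq_mul, mul_one]
    have : ((n - 2 : ℕ) : ZMod 3) = (n : ZMod 3) - 2 := by
      have h2 : (2:ℕ) ≤ n := by omega
      push_cast [Nat.cast_sub h2]
      ring
    rw [this]
  -- the main entry (i,j)
  set s : Finset (Fin n) := (t.erase i).erase j with hsdef
  have himem : i ∈ t := Finset.mem_erase.2 ⟨hiz, Finset.mem_univ i⟩
  have hjmem : j ∈ t.erase i := Finset.mem_erase.2 ⟨Ne.symm hij,
    Finset.mem_erase.2 ⟨hjz, Finset.mem_univ j⟩⟩
  have hmain : (∑ k ∈ s, Q i k * Q k j) = (μ : ℂ) * Q i j - 1 := by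
    have h := key i j hij
    rw [← Finset.sum_erase_add _ _ (Finset.mem_univ z0), ← htdef,
      ← Finset.sum_erase_add _ _ himem, ← Finset.sum_erase_add _ _ hjmem, ← hsdef] at h
    rw [hdiag i, hdiag j, zero_mul, mul_zero, add_zero, add_zero,
      hsf i z0 hiz (Or.inr rfl), hsf z0 j (Ne.symm hjz) (Or.inl rfl), one_mul] at h
    linear_combination h
  -- C-membership of products
  have hCprod : ∀ k ∈ s, C (Q i k * Q k j) := by
    intro k hk
    have hkj := (Finset.mem_erase.1 hk).1
    have hki := (Finset.mem_erase.1 (Finset.mem_erase.1 hk).2).1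
    exact C_mul (hC i k (Ne.symm hki)) (hC k j hkj)
  -- integer equation from imaginary parts
  have hCij : C (Q i j) := hC i j hij
  have hT : (∑ k ∈ s, qe (Q i k * Q k j)) = M * qe (Q i j) := by
    have him : (∑ k ∈ s, Q i k * Q k j).im = ((M * qe (Q i j) : ℤ) : ℝ) * (Real.sqrt 3 / 2) := by
      rw [hmain, Complex.sub_im, Complex.mul_im, Complex.ofReal_re, Complex.ofReal_im,
        Complex.one_im, im_of_C hCij]
      push_cast
      rw [hM]
      ring
    have := sum_qe_of_im hCprod him
    exact_mod_cast this
  -- reduce mod 3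
  have hrow' : (∑ k ∈ s, qe (Q i k)) = - qe (Q i j) := by
    have h := rowq i hiz
    rw [← Finset.sum_erase_add _ _ hjmem, ← hsdef] at h
    linarith
  have hcol' : (∑ k ∈ s, qe (Q k j)) = - qe (Q i j) := by
    have h := colq j hjz
    have himem' : i ∈ t.erase j := Finset.mem_erase.2 ⟨hij, himem⟩
    rw [← Finset.sum_erase_add _ _ himem'] at h
    have hcomm : (t.erase j).erase i = s := by
      rw [hsdef, Finset.erase_right_comm]
    rw [hcomm] at h
    linarith
  set ε : ZMod 3 := ((qe (Q i j) : ℤ) : ZMod 3) with hεdef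
  have hTmod : ((∑ k ∈ s, qe (Q i k * Q k j) : ℤ) : ZMod 3) = ε := by
    have h1 : ((∑ k ∈ s, qe (Q i k * Q k j) : ℤ) : ZMod 3)
        = ∑ k ∈ s, (((qe (Q i k) : ℤ) : ZMod 3) + ((qe (Q k j) : ℤ) : ZMod 3)) := by
      push_cast
      refine Finset.sum_congr rfl fun k hk => ?_
      have hkj := (Finset.mem_erase.1 hk).1
      have hki := (Finset.mem_erase.1 (Finset.mem_erase.1 hk).2).1
      exact_mod_cast qe_mul_mod (hC i k (Ne.symm hki)) (hC k j hkj)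
    rw [h1, Finset.sum_add_distrib]
    have h2 : (∑ k ∈ s, ((qe (Q i k) : ℤ) : ZMod 3)) = -ε := by
      have : (∑ k ∈ s, ((qe (Q i k) : ℤ) : ZMod 3))
          = ((∑ k ∈ s, qe (Q i k) : ℤ) : ZMod 3) := by push_cast; rfl
      rw [this, hrow']; push_cast; rfl
    have h3 : (∑ k ∈ s, ((qe (Q k j) : ℤ) : ZMod 3)) = -ε := by
      have : (∑ k ∈ s, ((qe (Q k j) : ℤ) : ZMod 3))
          = ((∑ k ∈ s, qe (Q k j) : ℤ) : ZMod 3) := by push_cast; rfl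
      rw [this, hcol']; push_cast; rfl
    rw [h2, h3]
    have h9 : (3 : ZMod 3) * ε = 0 := by
      rw [show (3 : ZMod 3) = 0 from rfl, zero_mul]
    linear_combination -h9
  have hεne : ε ≠ 0 := by
    rcases hCij with h | h | h
    · exact absurd h hQij
    · rw [hεdef, h, qe_w]; decide
    · rw [hεdef, h, qe_w2]; decide
  have hM1 : (M : ZMod 3) = 1 := by
    have h : ((∑ k ∈ s, qe (Q i k * Q k j) : ℤ) : ZMod 3)
        = ((M * qe (Q i j) : ℤ) : ZMod 3) := by rw [hT]
    rw [hTmod] at h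
    push_cast at h
    rw [← hεdef] at h
    have h' : ((M : ZMod 3) - 1) * ε = 0 := by linear_combination -h
    rcases mul_eq_zero.1 h' with h'' | h''
    · exact sub_eq_zero.1 h''
    · exact absurd h'' hεne
  have hnz : (n : ZMod 3) = 0 := by
    have : (n : ZMod 3) = 1 + 2 := by rw [← hM1, hMn]; ring
    rw [this]; decide
  have hdvd : 3 ∣ n := (ZMod.natCast_eq_zero_iff n 3).1 hnz
  omega
end

section
/- Let n₁, n₂ be positive integers and let Q₁ and Q₂ be an n₁×n₁ and an n₂×n₂ complex self-adjoint matrix, respectively, each with zero diagonal and all off-diagonal entries of modulus one, satisfying Q₁² = (n₁−1)·I − 2·Q₁ and Q₂² = (n₂−1)·I − 2·Q₂. Then the (n₁n₂)×(n₁n₂) matrix Q := (Q₁ + I) ⊗ (Q₂ + I) − I (Kronecker product) is self-adjoint with zero diagonal and all off-diagonal entries of modulus one, and satisfies Q² = (n₁n₂ − 1)·I − 2·Q. -/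
open Kronecker Matrix

theorem seidel_kronecker_construction
    (n₁ n₂ : ℕ) (hn₁ : 0 < n₁) (hn₂ : 0 < n₂)
    (Q₁ : Matrix (Fin n₁) (Fin n₁) ℂ) (Q₂ : Matrix (Fin n₂) (Fin n₂) ℂ)
    (h₁herm : Q₁.IsHermitian) (h₁diag : ∀ i, Q₁ i i = 0)
    (h₁off : ∀ i j, i ≠ j → ‖Q₁ i j‖ = 1)
    (h₂herm : Q₂.IsHermitian) (h₂diag : ∀ i, Q₂ i i = 0)
    (h₂off : ∀ i j, i ≠ j → ‖Q₂ i j‖ = 1)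
    (h₁eq : Q₁ ^ 2 = ((n₁ : ℂ) - 1) • (1 : Matrix (Fin n₁) (Fin n₁) ℂ) - (2 : ℂ) • Q₁)
    (h₂eq : Q₂ ^ 2 = ((n₂ : ℂ) - 1) • (1 : Matrix (Fin n₂) (Fin n₂) ℂ) - (2 : ℂ) • Q₂) :
    ∀ Q : Matrix (Fin n₁ × Fin n₂) (Fin n₁ × Fin n₂) ℂ,
      Q = (Q₁ + 1) ⊗ₖ (Q₂ + 1) - 1 →
      Q.IsHermitian ∧
      (∀ p, Q p p = 0) ∧
      (∀ p q, p ≠ q → ‖Q p q‖ = 1) ∧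
      Q ^ 2 = ((n₁ * n₂ : ℂ) - 1) • (1 : Matrix (Fin n₁ × Fin n₂) (Fin n₁ × Fin n₂) ℂ)
          - (2 : ℂ) • Q := by
  intro Q hQ
  subst hQ
  set S := Q₁ + 1 with hS
  set T := Q₂ + 1 with hT
  have hSherm : Sᴴ = S := by
    rw [hS, Matrix.conjTranspose_add, h₁herm.eq, Matrix.conjTranspose_one]
  have hTherm : Tᴴ = T := by
    rw [hT, Matrix.conjTranspose_add, h₂herm.eq, Matrix.conjTranspose_one]
  have hSdiag : ∀ i, S i i = 1 := by
    intro i; simp [hS, Matrix.add_apply, h₁diag i, Matrix.one_apply]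
  have hSnorm : ∀ i j, ‖S i j‖ = 1 := by
    intro i j
    by_cases h : i = j
    · subst h; rw [hSdiag]; simp
    · simp [hS, Matrix.add_apply, Matrix.one_apply_ne h, h₁off i j h]
  have hTdiag : ∀ i, T i i = 1 := by
    intro i; simp [hT, Matrix.add_apply, h₂diag i, Matrix.one_apply]
  have hTnorm : ∀ i j, ‖T i j‖ = 1 := by
    intro i j
    by_cases h : i = j
    · subst h; rw [hTdiag]; simp
    · simp [hT, Matrix.add_apply, Matrix.one_apply_ne h, h₂off i j h]
  have hS2 : S * S = (n₁ : ℂ) • (1 : Matrix (Fin n₁) (Fin n₁) ℂ) := by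
    have : S * S = Q₁ ^ 2 + (2 : ℂ) • Q₁ + 1 := by
      rw [hS, add_mul, mul_add, mul_add, mul_one, one_mul, pow_two, two_smul]; simp only [mul_one]; abel
    rw [this, h₁eq]
    ext i j
    simp [Matrix.add_apply, Matrix.sub_apply, Matrix.smul_apply, Matrix.one_apply]
    ring_nf
    by_cases h : i = j <;> simp [h] <;> ring
  have hT2 : T * T = (n₂ : ℂ) • (1 : Matrix (Fin n₂) (Fin n₂) ℂ) := by
    have : T * T = Q₂ ^ 2 + (2 : ℂ) • Q₂ + 1 := by
      rw [hT, add_mul, mul_add, mul_add, mul_one, one_mul, pow_two, two_smul]; simp only [mul_one]; abel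
    rw [this, h₂eq]
    ext i j
    simp [Matrix.add_apply, Matrix.sub_apply, Matrix.smul_apply, Matrix.one_apply]
    ring_nf
    by_cases h : i = j <;> simp [h] <;> ring
  refine ⟨?_, ?_, ?_, ?_⟩
  · -- Hermitian
    show _ᴴ = _
    rw [Matrix.conjTranspose_sub, Matrix.conjTranspose_one]
    congr 1
    ext ⟨i, k⟩ ⟨j, l⟩
    simp only [Matrix.conjTranspose_apply, Matrix.kroneckerMap_apply, star_mul']
    rw [← Matrix.conjTranspose_apply S, ← Matrix.conjTranspose_apply T, hSherm, hTherm]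
  · intro ⟨i, k⟩
    simp [Matrix.sub_apply, Matrix.kroneckerMap_apply, hSdiag i, hTdiag k, Matrix.one_apply]
  · rintro ⟨i, k⟩ ⟨j, l⟩ hpq
    have : ((i, k) : Fin n₁ × Fin n₂) ≠ (j, l) := hpq
    rw [Matrix.sub_apply, Matrix.one_apply_ne this, sub_zero,
      Matrix.kroneckerMap_apply, norm_mul, hSnorm, hTnorm, mul_one]
  · rw [pow_two, mul_sub, sub_mul, sub_mul, Matrix.mul_one, Matrix.one_mul,
      ← Matrix.mul_kronecker_mul, hS2, hT2, Matrix.smul_kronecker, Matrix.kronecker_smul,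
      Matrix.one_kronecker_one, smul_smul]
    ext p q
    by_cases h : p = q <;>
      simp [Matrix.sub_apply, Matrix.smul_apply, Matrix.one_apply, h] <;> ring
end
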